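/- arXiv:2403.05070 — 4 statements merged into one kernel-verified Lean document; each statement's English description precedes it below -/
import Mathlib

section
/- Let f : ℝⁿ → ℝ be μ-strongly convex, d ≠ 0, and suppose t > 0 satisfies the Armijo condition f(x + t d) - f(x) ≤ σ t ⟨∇f(x), d⟩ with σ ∈ (0,1), and additionally ⟨∇f(x), d⟩ = -(‖∇f(x)‖ + η)‖d‖². Then t ≤ 2(1-σ)(‖∇f(x)‖ + η)/μ. -/
open RealInnerProductSpace

/-- upper bound for an Armijo step under strong convexity. -/
theorem stmt_11 (n : ℕ)
    (f : EuclideanSpace ℝ (Fin n) → ℝ) (hf : Differentiable ℝ f)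
    (μ : ℝ) (hμ : 0 < μ)
    (hsc : ∀ x y : EuclideanSpace ℝ (Fin n),
      f y ≥ f x + ⟪gradient f x, y - x⟫ + (μ / 2) * ‖y - x‖ ^ 2)
    (η σ : ℝ) (hη : 0 < η) (hσ : σ ∈ Set.Ioo (0:ℝ) 1)
    (x d : EuclideanSpace ℝ (Fin n)) (hd : d ≠ 0)
    (hdir : ⟪gradient f x, d⟫ = -(‖gradient f x‖ + η) * ‖d‖ ^ 2)
    (t : ℝ) (ht : 0 < t)
    (harmijo : f (x + t • d) - f x ≤ σ * t * ⟪gradient f x, d⟫) :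
    t ≤ 2 * (1 - σ) * (‖gradient f x‖ + η) / μ := by
  have hsc' := hsc x (x + t • d)
  have hsub : x + t • d - x = t • d := by abel
  rw [hsub, real_inner_smul_right, norm_smul, Real.norm_eq_abs,
    abs_of_pos ht] at hsc'
  rw [hdir] at hsc' harmijo
  have hdn : 0 < ‖d‖ := norm_pos_iff.mpr hd
  have key : μ / 2 * (t * ‖d‖) ^ 2 ≤ (1 - σ) * t * (‖gradient f x‖ + η) * ‖d‖ ^ 2 := by
    nlinarith [hsc', harmijo]
  have h2 : μ / 2 * t ≤ (1 - σ) * (‖gradient f x‖ + η) := by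
    have hd2 : 0 < ‖d‖ ^ 2 := by positivity
    nlinarith [key, mul_pos ht hd2]
  rw [le_div_iff₀ hμ]
  nlinarith [h2]
end

section
/- If f is L-Lipschitz-gradient and μ-strongly convex, d ≠ 0 satisfies ⟨∇f(x), d⟩ = -(‖∇f(x)‖+η)‖d‖², and t is the stepsize produced by backtracking Armijo line search (starting from 1 with factor δ), then min{1, 2δ(1-σ)η/L} ≤ t ≤ min{1, 2(1-σ)(‖∇f(x)‖+η)/μ}. -/
/-!
The upper bound compares the Armijo inequality at `t` with the strong convexity lower bound
`f (x + t d) ≥ f x + t ⟪∇f x, d⟫ + μ t² ‖d‖² / 2`. For the lower bound, either `t = 1`, or the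
Armijo inequality fails at the previous trial step `t / δ`; comparing that failure with the
descent lemma `f (x + s d) ≤ f x + s ⟪∇f x, d⟫ + L s² ‖d‖² / 2` forces
`t / δ > 2 (1 - σ) (‖∇f x‖ + η) / L`.
-/

open RealInnerProductSpace

theorem le_add_mul_add_sq_of_deriv_sub_le {φ φ' : ℝ → ℝ} {K s : ℝ}
    (hφ : ∀ u, HasDerivAt φ (φ' u) u) (hK : ∀ u ∈ Set.Ioo 0 s, φ' u - φ' 0 ≤ K * u)
    (hs : 0 ≤ s) :
    φ s ≤ φ 0 + s * φ' 0 + K * s ^ 2 / 2 := by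
  set ψ : ℝ → ℝ := fun u => φ u - u * φ' 0 - K * u ^ 2 / 2
  have hψ : ∀ u, HasDerivAt ψ (φ' u - φ' 0 - K * u) u := fun u => by
    have hsq : HasDerivAt (fun u : ℝ => K * u ^ 2 / 2) (K * u) u :=
      (((hasDerivAt_pow 2 u).const_mul K).div_const 2).congr_deriv (by norm_num; ring)
    exact ((hφ u).sub ((hasDerivAt_id u).mul_const (φ' 0))).sub hsq |>.congr_deriv (by simp)
  have hanti : AntitoneOn ψ (Set.Icc 0 s) := by
    refine antitoneOn_of_deriv_nonpos (convex_Icc 0 s)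
      (fun u _ => (hψ u).continuousAt.continuousWithinAt)
      (fun u _ => (hψ u).differentiableAt.differentiableWithinAt) fun u hu => ?_
    rw [interior_Icc] at hu
    rw [(hψ u).deriv]
    linarith [hK u hu]
  have := hanti (Set.left_mem_Icc.2 hs) (Set.right_mem_Icc.2 hs) hs
  simp only [ψ] at this
  linarith

section LineSearch

variable {E : Type*} [NormedAddCommGroup E] [InnerProductSpace ℝ E] [CompleteSpace E]
  {f : E → ℝ} {x d : E}

theorem hasDerivAt_apply_add_smul (hf : Differentiable ℝ f) (x d : E) (t : ℝ) :
    HasDerivAt (fun t : ℝ => f (x + t • d)) ⟪gradient f (x + t • d), d⟫ t := by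
  have hline : HasDerivAt (fun t : ℝ => x + t • d) d t := by
    simpa using ((hasDerivAt_id t).smul_const d).const_add x
  simpa [Function.comp_def] using
    (hf (x + t • d)).hasGradientAt.hasFDerivAt.comp_hasDerivAt t hline

theorem apply_add_smul_le_of_norm_gradient_sub_le (hf : Differentiable ℝ f) {L : ℝ}
    (hLip : ∀ y, ‖gradient f y - gradient f x‖ ≤ L * ‖y - x‖) (d : E) {s : ℝ} (hs : 0 ≤ s) :
    f (x + s • d) ≤ f x + s * ⟪gradient f x, d⟫ + L * ‖d‖ ^ 2 * s ^ 2 / 2 := by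
  have key := le_add_mul_add_sq_of_deriv_sub_le (K := L * ‖d‖ ^ 2)
    (hasDerivAt_apply_add_smul hf x d) (fun u hu => ?_) hs
  · simpa using key
  calc ⟪gradient f (x + u • d), d⟫ - ⟪gradient f (x + (0 : ℝ) • d), d⟫
      = ⟪gradient f (x + u • d) - gradient f x, d⟫ := by simp [inner_sub_left]
    _ ≤ ‖gradient f (x + u • d) - gradient f x‖ * ‖d‖ := real_inner_le_norm _ _
    _ ≤ L * ‖(x + u • d) - x‖ * ‖d‖ := by gcongr; exact hLip _
    _ = L * ‖d‖ ^ 2 * u := by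
      rw [add_sub_cancel_left, norm_smul, Real.norm_of_nonneg hu.1.le]; ring

theorem lt_mul_of_not_armijo (hf : Differentiable ℝ f) {L : ℝ}
    (hLip : ∀ y, ‖gradient f y - gradient f x‖ ≤ L * ‖y - x‖) (hd : d ≠ 0) {c σ s : ℝ}
    (hdir : ⟪gradient f x, d⟫ = -c * ‖d‖ ^ 2) (hs : 0 < s)
    (hfail : f (x + s • d) > f x + σ * s * ⟪gradient f x, d⟫) :
    2 * (1 - σ) * c < L * s := by
  have hdesc := apply_add_smul_le_of_norm_gradient_sub_le hf hLip d hs.le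
  rw [hdir] at hdesc hfail
  have hpos : 0 < s * ‖d‖ ^ 2 := by positivity [norm_pos_iff.2 hd]
  nlinarith

theorem mul_le_of_armijo {μ : ℝ}
    (hsc : ∀ y, f y ≥ f x + ⟪gradient f x, y - x⟫ + (μ / 2) * ‖y - x‖ ^ 2) (hd : d ≠ 0)
    {c σ t : ℝ} (hdir : ⟪gradient f x, d⟫ = -c * ‖d‖ ^ 2) (ht : 0 < t)
    (harmijo : f (x + t • d) ≤ f x + σ * t * ⟪gradient f x, d⟫) :
    μ * t ≤ 2 * (1 - σ) * c := by
  have hstrong := hsc (x + t • d)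
  rw [add_sub_cancel_left, real_inner_smul_right, norm_smul, Real.norm_of_nonneg ht.le,
    hdir] at hstrong
  rw [hdir] at harmijo
  have hpos : 0 < t * ‖d‖ ^ 2 := by positivity [norm_pos_iff.2 hd]
  nlinarith

end LineSearch

theorem stmt_12_general (n : ℕ)
    (f : EuclideanSpace ℝ (Fin n) → ℝ) (hf : Differentiable ℝ f)
    (L μ : ℝ) (hL : 0 < L) (hμ : 0 < μ)
    (hLip : ∀ x y : EuclideanSpace ℝ (Fin n),
      ‖gradient f y - gradient f x‖ ≤ L * ‖y - x‖)
    (hsc : ∀ x y : EuclideanSpace ℝ (Fin n),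
      f y ≥ f x + ⟪gradient f x, y - x⟫ + (μ / 2) * ‖y - x‖ ^ 2)
    (η σ δ : ℝ) (hσ : σ ∈ Set.Ioo (0:ℝ) 1) (hδ : δ ∈ Set.Ioo (0:ℝ) 1)
    (x d : EuclideanSpace ℝ (Fin n)) (hd : d ≠ 0)
    (hdir : ⟪gradient f x, d⟫ = -(‖gradient f x‖ + η) * ‖d‖ ^ 2)
    (t : ℝ) (l : ℕ) (hl : t = δ ^ l)
    (harmijo : f (x + t • d) ≤ f x + σ * t * ⟪gradient f x, d⟫)
    (hlargest : t ≠ 1 →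
      f (x + (t / δ) • d) > f x + σ * (t / δ) * ⟪gradient f x, d⟫) :
    min 1 (2 * δ * (1 - σ) * η / L) ≤ t ∧
      t ≤ min 1 (2 * (1 - σ) * (‖gradient f x‖ + η) / μ) := by
  obtain ⟨hδ0, hδ1⟩ := hδ
  have ht0 : 0 < t := hl ▸ pow_pos hδ0 l
  have ht1 : t ≤ 1 := hl ▸ pow_le_one₀ hδ0.le hδ1.le
  refine ⟨?_, le_min ht1 ?_⟩
  · rcases eq_or_ne t 1 with rfl | hne
    · exact min_le_left _ _
    have hprev := lt_mul_of_not_armijo hf (hLip x) hd hdir (div_pos ht0 hδ0) (hlargest hne)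
    have hscaled : 2 * δ * (1 - σ) * (‖gradient f x‖ + η) < t * L :=
      calc 2 * δ * (1 - σ) * (‖gradient f x‖ + η)
          = δ * (2 * (1 - σ) * (‖gradient f x‖ + η)) := by ring
        _ < δ * (L * (t / δ)) := mul_lt_mul_of_pos_left hprev hδ0
        _ = t * L := by field_simp
    refine (min_le_right _ _).trans ((div_le_iff₀ hL).2 (le_trans ?_ hscaled.le))
    have : 0 ≤ 1 - σ := sub_nonneg.2 hσ.2.le
    gcongr
    exact le_add_of_nonneg_left (norm_nonneg _)
  · rw [le_div_iff₀ hμ, mul_comm]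
    exact mul_le_of_armijo (hsc x) hd hdir ht0 harmijo

/-- bounds on the backtracking Armijo stepsize, with Lipschitz
gradient and strong convexity. -/
theorem stmt_12 (n : ℕ)
    (f : EuclideanSpace ℝ (Fin n) → ℝ) (hf : Differentiable ℝ f)
    (L μ : ℝ) (hL : 0 < L) (hμ : 0 < μ)
    (hLip : ∀ x y : EuclideanSpace ℝ (Fin n),
      ‖gradient f y - gradient f x‖ ≤ L * ‖y - x‖)
    (hsc : ∀ x y : EuclideanSpace ℝ (Fin n),
      f y ≥ f x + ⟪gradient f x, y - x⟫ + (μ / 2) * ‖y - x‖ ^ 2)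
    (η σ δ : ℝ) (hη : 0 < η) (hσ : σ ∈ Set.Ioo (0:ℝ) 1) (hδ : δ ∈ Set.Ioo (0:ℝ) 1)
    (x d : EuclideanSpace ℝ (Fin n)) (hd : d ≠ 0)
    (hdir : ⟪gradient f x, d⟫ = -(‖gradient f x‖ + η) * ‖d‖ ^ 2)
    (t : ℝ) (l : ℕ) (hl : t = δ ^ l)
    (harmijo : f (x + t • d) ≤ f x + σ * t * ⟪gradient f x, d⟫)
    (hlargest : t ≠ 1 →
      f (x + (t / δ) • d) > f x + σ * (t / δ) * ⟪gradient f x, d⟫) :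
    min 1 (2 * δ * (1 - σ) * η / L) ≤ t ∧
      t ≤ min 1 (2 * (1 - σ) * (‖gradient f x‖ + η) / μ) :=
  stmt_12_general n f hf L μ hL hμ hLip hsc η σ δ hσ hδ x d hd hdir t l hl harmijo hlargest
end

section
/- Let (c_k) be defined by c_i^k = max_{0 ≤ j ≤ m(k)} f_i(x_{k-j}) where m(0)=0, m(k) = min{m(k-1)+1, M-1}, and assume each iterate satisfies f_i(x_{k+1}) ≤ c_i^k + σ α_k ⟨∇f_i(x_k), d_k⟩ with ⟨∇f_i(x_k), d_k⟩ ≤ 0 and σ, α_k > 0. Then for each i the sequence (c_i^k)_k is nonincreasing in k. -/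
open RealInnerProductSpace

/-- the nonmonotone reference values c_i^k are nonincreasing in k. -/
theorem stmt_14 (n mm : ℕ) (M : ℕ) (hM : 1 ≤ M)
    (f : Fin mm → EuclideanSpace ℝ (Fin n) → ℝ)
    (x : ℕ → EuclideanSpace ℝ (Fin n))
    (d : ℕ → EuclideanSpace ℝ (Fin n))
    (α : ℕ → ℝ) (hα : ∀ k, 0 < α k)
    (σ : ℝ) (hσ : 0 < σ)
    (mfun : ℕ → ℕ) (hm0 : mfun 0 = 0)
    (hmrec : ∀ k, mfun (k + 1) = min (mfun k + 1) (M - 1))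
    (c : Fin mm → ℕ → ℝ)
    (hc : ∀ i k, c i k = (Finset.range (mfun k + 1)).sup'
      (Finset.nonempty_range_iff.mpr (Nat.succ_ne_zero _)) (fun j => f i (x (k - j))))
    (hdesc : ∀ i k, ⟪gradient (f i) (x k), d k⟫ ≤ 0)
    (harmijo : ∀ i k,
      f i (x (k + 1)) ≤ c i k + σ * α k * ⟪gradient (f i) (x k), d k⟫) :
    ∀ i k, c i (k + 1) ≤ c i k := by
  intro i k
  rw [hc i (k + 1)]
  apply Finset.sup'_le
  intro j hj
  rcases Nat.eq_zero_or_pos j with rfl | hjpos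
  · calc f i (x (k + 1 - 0)) = f i (x (k + 1)) := by norm_num
      _ ≤ c i k + σ * α k * ⟪gradient (f i) (x k), d k⟫ := harmijo i k
      _ ≤ c i k := by 
          have h1 := mul_nonpos_of_nonneg_of_nonpos (mul_nonneg hσ.le (hα k).le) (hdesc i k)
          linarith
  · have hj' : j ≤ mfun k + 1 := by
      have h1 := Finset.mem_range.mp hj
      have h2 := hmrec k
      omega
    have heq : k + 1 - j = k - (j - 1) := by omega
    rw [heq, hc i k]
    have hmem : j - 1 ∈ Finset.range (mfun k + 1) := Finset.mem_range.mpr (by omega)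
    exact Finset.le_sup' (fun j => f i (x (k - j))) hmem
end

section
/- Let a_k ≥ 0 satisfy a_{k+1} ≤ c · a_{k - m(k)} for all k, where 0 < c < 1 and 0 ≤ m(k) ≤ M - 1 for a fixed integer M ≥ 1. Then there exist c_5 > 0 and θ ∈ (0,1) with a_k ≤ c_5 θ^k a_0 for all k (R-linear convergence). -/
/-- delayed geometric decay implies R-linear convergence. -/
theorem stmt_17 (M : ℕ) (hM : 1 ≤ M) (c : ℝ) (hc : c ∈ Set.Ioo (0:ℝ) 1)
    (a : ℕ → ℝ) (ha : ∀ k, 0 ≤ a k)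
    (mfun : ℕ → ℕ) (hmle : ∀ k, mfun k ≤ M - 1) (hmk : ∀ k, mfun k ≤ k)
    (hrec : ∀ k, M - 1 ≤ k → a (k + 1) ≤ c * a (k - mfun k))
    (hinit : ∀ k, k < M - 1 → a (k + 1) ≤ a 0) :
    ∃ c₅ : ℝ, 0 < c₅ ∧ ∃ θ ∈ Set.Ioo (0:ℝ) 1,
      ∀ k, a k ≤ c₅ * θ ^ k * a 0 := by
  obtain ⟨hc0, hc1⟩ := hc
  set θ : ℝ := c ^ ((1:ℝ)/M) with hθdef
  have hMR : (0:ℝ) < (M:ℝ) := by exact_mod_cast hM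
  have hθ0 : 0 < θ := Real.rpow_pos_of_pos hc0 _
  have hθ1 : θ < 1 := by
    apply Real.rpow_lt_one hc0.le hc1
    positivity
  have hθM : θ ^ M = c := by
    rw [hθdef, ← Real.rpow_natCast (c ^ ((1:ℝ)/M)) M, ← Real.rpow_mul hc0.le]
    rw [one_div, inv_mul_cancel₀ (ne_of_gt hMR), Real.rpow_one]
  set C : ℝ := (1/θ) ^ (M-1) with hCdef
  have hC0 : 0 < C := by positivity
  have hCge : ∀ j, j ≤ M - 1 → 1 ≤ C * θ ^ j := by
    intro j hj
    have h1 : θ ^ (M-1) ≤ θ ^ j := pow_le_pow_of_le_one hθ0.le hθ1.le hj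
    have : C * θ ^ j = θ ^ j / θ ^ (M-1) := by
      rw [hCdef, div_pow, one_pow]; ring
    rw [this, le_div_iff₀ (by positivity), one_mul]; exact h1
  refine ⟨C, hC0, θ, ⟨hθ0, hθ1⟩, ?_⟩
  intro k
  induction k using Nat.strong_induction_on with
  | _ k ih =>
    match k with
    | 0 =>
      have : (1:ℝ) ≤ C := by
        have := hCge 0 (Nat.zero_le _); simpa using this
      nlinarith [ha 0]
    | (j+1) =>
      by_cases hj : j < M - 1
      · have h1 := hinit j hj
        have h2 : 1 ≤ C * θ ^ (j+1) := hCge (j+1) hj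
        nlinarith [ha 0]
      · push_neg at hj
        have h1 := hrec j hj
        have h2 : a (j - mfun j) ≤ C * θ ^ (j - mfun j) * a 0 :=
          ih _ (Nat.lt_succ_of_le (Nat.sub_le _ _))
        have hmj : mfun j ≤ M - 1 := hmle j
        have hpow : c * θ ^ (j - mfun j) ≤ θ ^ (j+1) := by
          rw [← hθM, ← pow_add]
          apply pow_le_pow_of_le_one hθ0.le hθ1.le
          omega
        calc a (j+1) ≤ c * a (j - mfun j) := h1
          _ ≤ c * (C * θ ^ (j - mfun j) * a 0) := by
              apply mul_le_mul_of_nonneg_left h2 hc0.le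
          _ = C * (c * θ ^ (j - mfun j)) * a 0 := by ring
          _ ≤ C * θ ^ (j+1) * a 0 := by
              apply mul_le_mul_of_nonneg_right _ (ha 0)
              exact mul_le_mul_of_nonneg_left hpow hC0.le
end
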